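/- arXiv:1509.00752 — 3 statements merged into one kernel-verified Lean document; each statement's English description precedes it below -/
import Mathlib

section
/- If x, y, B are integers with B ≠ 0 and x³ + y³ = B, then max{|x|, |y|} ≤ 2·√|B|. -/
/-!
Since `x³ + y³ = (x + y)(x² - xy + y²)` with `x² - xy + y² ≥ 0`, a nonzero factor `x + y` of an
integer has `|x + y| ≥ 1`, so `x² - xy + y² ≤ |x³ + y³|`. The quadratic form controls both squares:
`4(x² - xy + y²) - x² = 2x² + (x - 2y)² ≥ 0`, whence `max(|x|, |y|)² ≤ 4|x³ + y³|`.
-/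

section LinearOrderedCommRing

variable {K : Type*} [CommRing K] [LinearOrder K] [IsStrictOrderedRing K]

theorem sq_le_four_mul_sq_sub_mul_add_sq (x y : K) : x ^ 2 ≤ 4 * (x ^ 2 - x * y + y ^ 2) := by
  nlinarith [sq_nonneg x, sq_nonneg (x - 2 * y)]

theorem sq_sub_mul_add_sq_le_abs_cube_add_cube {x y : K} (hxy : 1 ≤ |x + y|) :
    x ^ 2 - x * y + y ^ 2 ≤ |x ^ 3 + y ^ 3| := by
  have hq : 0 ≤ x ^ 2 - x * y + y ^ 2 := by nlinarith [sq_nonneg (x - y), sq_nonneg x, sq_nonneg y]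
  calc x ^ 2 - x * y + y ^ 2 ≤ |x + y| * (x ^ 2 - x * y + y ^ 2) := le_mul_of_one_le_left hq hxy
    _ = |x ^ 3 + y ^ 3| := by
      rw [← abs_of_nonneg hq, ← abs_mul]; congr 1; ring

theorem max_abs_sq_le_four_mul_abs_cube_add_cube {x y : K} (hxy : 1 ≤ |x + y|) :
    max |x| |y| ^ 2 ≤ 4 * |x ^ 3 + y ^ 3| := by
  have hq := sq_sub_mul_add_sq_le_abs_cube_add_cube hxy
  rcases max_cases |x| |y| with ⟨hm, -⟩ | ⟨hm, -⟩ <;> rw [hm, sq_abs]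
  · linarith [sq_le_four_mul_sq_sub_mul_add_sq x y]
  · linarith [sq_le_four_mul_sq_sub_mul_add_sq y x]

end LinearOrderedCommRing

theorem max_abs_le_two_mul_sqrt_abs_cube_add_cube {x y : ℝ} (hxy : 1 ≤ |x + y|) :
    max |x| |y| ≤ 2 * Real.sqrt |x ^ 3 + y ^ 3| := by
  rw [← pow_le_pow_iff_left₀ (by positivity) (by positivity) two_ne_zero, mul_pow,
    Real.sq_sqrt (abs_nonneg _)]
  norm_num [max_abs_sq_le_four_mul_abs_cube_add_cube hxy]

/-- If `x, y, B` are integers with `B ≠ 0` and `x³ + y³ = B`, then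
`max {|x|, |y|} ≤ 2·√|B|`. -/
theorem cube_sum_height_bound (x y B : ℤ) (hB : B ≠ 0) (h : x ^ 3 + y ^ 3 = B) :
    (max |x| |y| : ℝ) ≤ 2 * Real.sqrt |B| := by
  have hxy : x + y ≠ 0 := by
    rintro hxy
    obtain rfl : x = -y := by omega
    exact hB (by rw [← h]; ring)
  have hxy' : (1 : ℝ) ≤ |(x : ℝ) + y| := by exact_mod_cast Int.one_le_abs hxy
  have := max_abs_le_two_mul_sqrt_abs_cube_add_cube hxy'
  rwa [← Int.cast_pow, ← Int.cast_pow, ← Int.cast_add, h] at this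
end

section
/- Let K be a number field, S a finite set of places containing the archimedean ones, and suppose O_{K,S} is a UFD. Let f = [F(x,y), G(x,y)] : ℙ¹ → ℙ¹ be given by coprime homogeneous polynomials F, G ∈ O_{K,S}[x,y] of degree d ≥ 1 with resultant R = Res(F,G) ≠ 0. If α = a/b with a, b ∈ O_{K,S} coprime and f(α) ∈ O_{K,S}, then G(a,b) divides R in O_{K,S}. -/
/-!
Multiplying the Sylvester matrix of `F, G` by the vector of monomials `a^(2d-1-j) b^j` gives a
vector whose entries are monomial multiples of `F(a,b)` and `G(a,b)`. Multiplying back by the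
adjugate, every common divisor of `F(a,b)` and `G(a,b)` divides `Res(F,G) a^(2d-1)` and
`Res(F,G) b^(2d-1)`, hence `Res(F,G)` because `a` and `b` are coprime. Integrality of
`F(a,b)/G(a,b)` makes `G(a,b)` such a common divisor.
-/

open MvPolynomial IsDedekindDomain NumberField

/-- The coefficient of `x^i y^(d-i)` in a binary form `F` of degree `d`. -/
noncomputable def binaryCoeff {R : Type*} [CommRing R] (d : ℕ)
    (F : MvPolynomial (Fin 2) R) (i : ℕ) : R :=
  MvPolynomial.coeff (Finsupp.single 0 i + Finsupp.single 1 (d - i)) F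

/-- The Sylvester matrix of two binary forms `F`, `G` of degree `d`. -/
noncomputable def sylvesterMatrix {R : Type*} [CommRing R] (d : ℕ)
    (F G : MvPolynomial (Fin 2) R) : Matrix (Fin (2 * d)) (Fin (2 * d)) R :=
  Matrix.of fun i j =>
    if (i : ℕ) < d then
      (if (i : ℕ) ≤ (j : ℕ) ∧ (j : ℕ) ≤ (i : ℕ) + d then
        binaryCoeff d F (d - ((j : ℕ) - (i : ℕ))) else 0)
    else
      (if (i : ℕ) - d ≤ (j : ℕ) ∧ (j : ℕ) ≤ (i : ℕ) then
        binaryCoeff d G (d - ((j : ℕ) - ((i : ℕ) - d))) else 0)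

/-- The resultant of two binary forms of degree `d`. -/
noncomputable def binaryResultant {R : Type*} [CommRing R] (d : ℕ)
    (F G : MvPolynomial (Fin 2) R) : R :=
  (sylvesterMatrix d F G).det

open Matrix

theorem IsRelPrime.dvd_of_dvd_mul_left_of_dvd_mul_left {α : Type*} [CommMonoidWithZero α]
    [IsLeftCancelMulZero α] [DecompositionMonoid α] {g r x y : α} (hxy : IsRelPrime x y)
    (hx : g ∣ r * x) (hy : g ∣ r * y) : g ∣ r := by
  obtain ⟨g₁, g₂, hg₁, hg₂, rfl⟩ := exists_dvd_and_dvd_of_dvd_mul hx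
  obtain ⟨r', rfl⟩ := hg₁
  rcases eq_or_ne g₁ 0 with rfl | hg₁
  · simp
  rw [mul_assoc] at hy
  have hg₂y : g₂ ∣ r' * y := (mul_dvd_mul_iff_left hg₁).mp hy
  exact mul_dvd_mul_left g₁ ((hxy.of_dvd_left hg₂).dvd_of_dvd_mul_right hg₂y)

theorem Matrix.det_smul_eq_adjugate_mulVec_mulVec {n α : Type*} [Fintype n] [DecidableEq n]
    [CommRing α] (A : Matrix n n α) (v : n → α) : A.det • v = A.adjugate *ᵥ (A *ᵥ v) := by
  rw [Matrix.mulVec_mulVec, Matrix.adjugate_mul, Matrix.smul_mulVec, Matrix.one_mulVec]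

section BinaryForm

variable {R : Type*} [CommRing R] {d : ℕ} {F G H : MvPolynomial (Fin 2) R}

theorem MvPolynomial.IsHomogeneous.eq_single_add_single_of_coeff_ne_zero
    (hH : H.IsHomogeneous d) {m : Fin 2 →₀ ℕ} (hm : coeff m H ≠ 0) :
    m 0 ≤ d ∧ Finsupp.single 0 (m 0) + Finsupp.single 1 (d - m 0) = m := by
  have hdeg : m 0 + m 1 = d := by
    simpa [Finsupp.weight_apply, Finsupp.sum_fintype, Fin.sum_univ_two] using hH hm
  refine ⟨by omega, ?_⟩
  ext j
  fin_cases j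
  · simp
  · simp only [Fin.mk_one, Finsupp.add_apply, Finsupp.single_eq_same,
      Finsupp.single_eq_of_ne one_ne_zero]
    omega

theorem MvPolynomial.IsHomogeneous.eval_eq_sum_binaryCoeff (hH : H.IsHomogeneous d) (a b : R) :
    eval ![a, b] H = ∑ k ∈ Finset.range (d + 1), binaryCoeff d H k * a ^ k * b ^ (d - k) := by
  classical
  set φ : ℕ → Fin 2 →₀ ℕ := fun k => Finsupp.single 0 k + Finsupp.single 1 (d - k)
  have hφ_inj : Set.InjOn φ (Finset.range (d + 1)) := fun k _ l _ h => by
    simpa [φ] using congr($h 0)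
  have hsupp : H.support ⊆ (Finset.range (d + 1)).image φ := fun m hm => by
    obtain ⟨hle, hφm⟩ := hH.eq_single_add_single_of_coeff_ne_zero (mem_support_iff.mp hm)
    exact Finset.mem_image.mpr ⟨m 0, Finset.mem_range.mpr (by omega), hφm⟩
  rw [eval_eq', Finset.sum_subset hsupp fun m _ hm => by rw [notMem_support_iff.mp hm, zero_mul],
    Finset.sum_image hφ_inj]
  refine Finset.sum_congr rfl fun k _ => ?_
  simp [φ, binaryCoeff, Fin.prod_univ_two, Finsupp.single_apply, mul_assoc]

theorem sum_sylvesterRow_mul_monomial (hH : H.IsHomogeneous d) {s : ℕ} (hs : s < d) (a b : R) :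
    ∑ j : Fin (2 * d), (if s ≤ (j : ℕ) ∧ (j : ℕ) ≤ s + d then
        binaryCoeff d H (d - ((j : ℕ) - s)) else 0) * (a ^ (2 * d - 1 - j) * b ^ (j : ℕ))
      = a ^ (d - 1 - s) * b ^ s * eval ![a, b] H := by
  have hwindow : (Finset.range (2 * d)).filter (fun j => s ≤ j ∧ j ≤ s + d)
      = Finset.Ico s (s + d + 1) := by
    ext j
    simp only [Finset.mem_filter, Finset.mem_range, Finset.mem_Ico]
    omega
  rw [Fin.sum_univ_eq_sum_range (fun j => (if s ≤ j ∧ j ≤ s + d then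
      binaryCoeff d H (d - (j - s)) else 0) * (a ^ (2 * d - 1 - j) * b ^ j))]
  simp only [ite_mul, zero_mul]
  rw [← Finset.sum_filter, hwindow, Finset.sum_Ico_eq_sum_range,
    show s + d + 1 - s = d + 1 by omega, hH.eval_eq_sum_binaryCoeff, Finset.mul_sum, ← Finset.sum_range_reflect]
  refine Finset.sum_congr rfl fun k hk => ?_
  have hk : k < d + 1 := Finset.mem_range.mp hk
  rw [show d + 1 - 1 - k = d - k by omega, add_tsub_cancel_left, show d - (d - k) = k by omega,
    show 2 * d - 1 - (s + (d - k)) = (d - 1 - s) + k by omega, pow_add, pow_add]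
  ring

theorem sylvesterMatrix_mulVec_monomials (hF : F.IsHomogeneous d) (hG : G.IsHomogeneous d)
    (a b : R) :
    sylvesterMatrix d F G *ᵥ (fun j : Fin (2 * d) => a ^ (2 * d - 1 - j) * b ^ (j : ℕ))
      = fun i : Fin (2 * d) => if (i : ℕ) < d then a ^ (d - 1 - i) * b ^ (i : ℕ) * eval ![a, b] F
          else a ^ (2 * d - 1 - i) * b ^ ((i : ℕ) - d) * eval ![a, b] G := by
  funext i
  simp only [mulVec, dotProduct, sylvesterMatrix, of_apply]
  split_ifs with hi
  · exact sum_sylvesterRow_mul_monomial hF hi a b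
  · have hrow : ∀ j : ℕ, (i - d ≤ j ∧ j ≤ i) ↔ (i - d ≤ j ∧ j ≤ i - d + d) := fun j => by omega
    simp_rw [hrow, show 2 * d - 1 - i = d - 1 - (i - d) by omega]
    exact sum_sylvesterRow_mul_monomial hG (by omega) a b

theorem dvd_binaryResultant_mul_monomial (hF : F.IsHomogeneous d) (hG : G.IsHomogeneous d)
    {g a b : R} (hgF : g ∣ eval ![a, b] F) (hgG : g ∣ eval ![a, b] G) (j : Fin (2 * d)) :
    g ∣ binaryResultant d F G * (a ^ (2 * d - 1 - j) * b ^ (j : ℕ)) := by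
  have h := congrFun ((sylvesterMatrix d F G).det_smul_eq_adjugate_mulVec_mulVec
    fun j : Fin (2 * d) => a ^ (2 * d - 1 - j) * b ^ (j : ℕ)) j
  rw [sylvesterMatrix_mulVec_monomials hF hG, Pi.smul_apply, smul_eq_mul] at h
  rw [binaryResultant, h, mulVec, dotProduct]
  refine Finset.dvd_sum fun i _ => Dvd.dvd.mul_left ?_ _
  split_ifs
  · exact hgF.mul_left _
  · exact hgG.mul_left _

theorem dvd_binaryResultant_of_dvd_eval [IsLeftCancelMulZero R] [DecompositionMonoid R] (hd : 1 ≤ d)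
    (hF : F.IsHomogeneous d) (hG : G.IsHomogeneous d) {g a b : R} (hab : IsRelPrime a b)
    (hgF : g ∣ eval ![a, b] F) (hgG : g ∣ eval ![a, b] G) :
    g ∣ binaryResultant d F G := by
  have ha := dvd_binaryResultant_mul_monomial hF hG hgF hgG ⟨0, by omega⟩
  have hb := dvd_binaryResultant_mul_monomial hF hG hgF hgG ⟨2 * d - 1, by omega⟩
  simp only [pow_zero, mul_one, one_mul, tsub_zero, tsub_self] at ha hb
  exact (hab.pow (m := 2 * d - 1) (n := 2 * d - 1)).dvd_of_dvd_mul_left_of_dvd_mul_left ha hb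

end BinaryForm

theorem denominator_eval_dvd_resultant_general
    (K : Type*) [Field K] [NumberField K]
    (S : Set (HeightOneSpectrum (𝓞 K)))
    [UniqueFactorizationMonoid ↥(S.integer K)]
    (d : ℕ) (hd : 1 ≤ d)
    (F G : MvPolynomial (Fin 2) ↥(S.integer K))
    (hF : F.IsHomogeneous d) (hG : G.IsHomogeneous d)
    (a b : ↥(S.integer K))
    (hab : ∀ p : ↥(S.integer K), p ∣ a → p ∣ b → IsUnit p)
    (hGab : MvPolynomial.eval ![a, b] G ≠ 0)
    (hint : ((MvPolynomial.eval ![a, b] F : ↥(S.integer K)) : K) /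
        ((MvPolynomial.eval ![a, b] G : ↥(S.integer K)) : K) ∈ S.integer K) :
    MvPolynomial.eval ![a, b] G ∣ binaryResultant d F G := by
  have hGK : ((eval ![a, b] G : S.integer K) : K) ≠ 0 := by simpa using hGab
  have hGF : eval ![a, b] G ∣ eval ![a, b] F :=
    ⟨⟨_, hint⟩, Subtype.ext (by push_cast; field_simp)⟩
  exact dvd_binaryResultant_of_dvd_eval hd hF hG hab hGF dvd_rfl

/-- Let `K` be a number field, `S` a finite set of finite places, and suppose the
ring `O_{K,S}` of `S`-integers is a UFD.  Let `f = [F, G] : ℙ¹ → ℙ¹` be given by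
coprime homogeneous polynomials `F, G ∈ O_{K,S}[x,y]` of degree `d ≥ 1` with
resultant `R = Res(F,G) ≠ 0`.  If `α = a/b` with `a, b ∈ O_{K,S}` coprime and
`f(α) ∈ O_{K,S}`, then `G(a,b)` divides `R` in `O_{K,S}`. -/
theorem denominator_eval_dvd_resultant
    (K : Type*) [Field K] [NumberField K]
    (S : Set (HeightOneSpectrum (𝓞 K))) (hS : S.Finite)
    [UniqueFactorizationMonoid ↥(S.integer K)]
    (d : ℕ) (hd : 1 ≤ d)
    (F G : MvPolynomial (Fin 2) ↥(S.integer K))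
    (hF : F.IsHomogeneous d) (hG : G.IsHomogeneous d)
    (hFG : ∀ p : MvPolynomial (Fin 2) ↥(S.integer K), p ∣ F → p ∣ G → IsUnit p)
    (hR : binaryResultant d F G ≠ 0)
    (a b : ↥(S.integer K))
    (hb : b ≠ 0)
    (hab : ∀ p : ↥(S.integer K), p ∣ a → p ∣ b → IsUnit p)
    (hGab : MvPolynomial.eval ![a, b] G ≠ 0)
    (hint : ((MvPolynomial.eval ![a, b] F : ↥(S.integer K)) : K) /
        ((MvPolynomial.eval ![a, b] G : ↥(S.integer K)) : K) ∈ S.integer K) :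
    MvPolynomial.eval ![a, b] G ∣ binaryResultant d F G :=
  denominator_eval_dvd_resultant_general K S d hd F G hF hG a b hab hGab hint
end

section
/- For the family φ_{(r,s,t)}(x) = (rs·x³ + s·x + t)/(x² + 1) with r, s, t ∈ ℚ and r·s·t ≠ 0, the second iterate φ²_{(r,s,t)} is not a polynomial in ℚ[x]. -/
/-!
Put `p = rs·x³ + s·x + t` and `q = x² + 1`. If `q·(p² + q²)` divided
`rs·p³ + s·p·q² + t·q³`, then `q` would divide `rs·p³`; since `q` is irreducible over `ℚ`
and `rs ≠ 0`, `q ∣ p`. But `p ≡ (s - rs)·x + t (mod q)`, and a polynomial of degree `< 2`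
divisible by `q` vanishes, forcing `t = 0`.
-/

open Polynomial

theorem irreducible_X_sq_add_one {K : Type*} [Field K] [LinearOrder K] [IsStrictOrderedRing K] :
    Irreducible (X ^ 2 + 1 : K[X]) := by
  refine irreducible_of_degree_le_three_of_not_isRoot ?_ fun a ha => ?_
  · rw [← C_1, natDegree_X_pow_add_C]
    decide
  · simp only [IsRoot, eval_add, eval_pow, eval_X, eval_one] at ha
    nlinarith [sq_nonneg a]

theorem Prime.dvd_of_dvd_mul_pow_add_mul {R : Type*} [CommRing R] {q a b m : R} {n : ℕ}
    (hq : Prime q) (ha : ¬q ∣ a) (h : q ∣ a * b ^ n + q * m) : q ∣ b :=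
  have hab : q ∣ a * b ^ n := (dvd_add_left (dvd_mul_right q m)).mp h
  hq.dvd_of_dvd_pow ((hq.dvd_or_dvd hab).resolve_left ha)

theorem eq_zero_of_X_sq_add_one_dvd {R : Type*} [CommRing R] [NoZeroDivisors R] [Nontrivial R]
    {a b c : R} (h : X ^ 2 + 1 ∣ C a * X ^ 3 + C b * X + C c) : c = 0 := by
  have hrem : X ^ 2 + 1 ∣ C (b - a) * X + C c := by
    have hdiff : C (b - a) * X + C c = C a * X ^ 3 + C b * X + C c - (X ^ 2 + 1) * (C a * X) := by
      rw [C_sub]; ring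
    rw [hdiff]
    exact dvd_sub h (dvd_mul_right _ _)
  have hdeg : (X ^ 2 + 1 : R[X]).degree = 2 := by
    rw [← C_1, degree_X_pow_add_C two_pos]
    rfl
  have hzero := eq_zero_of_dvd_of_degree_lt hrem (hdeg ▸ degree_linear_lt)
  simpa using congrArg (coeff · 0) hzero

/-- For the family `φ_{(r,s,t)}(x) = (rs·x³ + s·x + t)/(x² + 1)` with
`r, s, t ∈ ℚ` and `r·s·t ≠ 0`, the second iterate `φ²_{(r,s,t)}` is not a
polynomial in `ℚ[x]`: writing `φ² = f/g` with `f = rs·p³ + s·p·q² + t·q³` and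
`g = q·(p² + q²)` where `p = rs·x³ + s·x + t` and `q = x² + 1`, the denominator
`g` does not divide the numerator `f`. -/
theorem second_iterate_not_polynomial (r s t : ℚ) (h : r * s * t ≠ 0)
    (p q : Polynomial ℚ)
    (hp : p = C (r * s) * X ^ 3 + C s * X + C t) (hq : q = X ^ 2 + 1) :
    ¬ (q * (p ^ 2 + q ^ 2) ∣ C (r * s) * p ^ 3 + C s * p * q ^ 2 + C t * q ^ 3) := by
  intro hdvd
  have hq_prime : Prime q := hq ▸ irreducible_X_sq_add_one.prime
  have hq_not_dvd : ¬q ∣ C (r * s) := fun hd =>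
    hq_prime.not_isUnit (isUnit_of_dvd_unit hd (isUnit_C.mpr (left_ne_zero_of_mul h).isUnit))
  have hq_dvd : q ∣ C (r * s) * p ^ 3 + q * (C s * p * q + C t * q ^ 2) := by
    convert (dvd_mul_right q _).trans hdvd using 1
    ring
  have hqp : q ∣ p := hq_prime.dvd_of_dvd_mul_pow_add_mul hq_not_dvd hq_dvd
  rw [hp, hq] at hqp
  exact right_ne_zero_of_mul h (eq_zero_of_X_sq_add_one_dvd hqp)
end
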